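/- Let η1=(1,0), η2=(1/2,√3/2), η3=η1−η2, and fix s∈(0,1) and J_∞>0. Let J:[0,∞)→[0,∞) be continuous with lim_{z→0+}J(z)=+∞ and lim_{z→+∞}J(z)=J_∞. Define Ĵ(A)=∑_{k=1}^3 J(|Aηk|) for A a real 2×2 matrix. Then the sublevel set K={A : Ĵ(A) ≤ s·J_∞} is a compact subset of the 2×2 real matrices. -/

import Mathlib

/-! Closedness: `J` is continuous on `(0, ∞)` and blows up at `0`, so whatever its value at `0`,
it is lower semicontinuous on `[0, ∞)`; hence `Ĵ` is lower semicontinuous and its sublevel sets are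
closed. Boundedness: on the sublevel set each term `J (|A ηₖ|)` is at most `s J∞ < J∞`, which
forces `|A ηₖ| ≤ M` for a threshold `M` beyond which `J > s J∞`; since `η₁, η₂` span `ℝ²`, this
bounds the entries of `A`. -/

noncomputable section
open Real Set Filter Matrix

def nrm (v : ℝ × ℝ) : ℝ := Real.sqrt (v.1 ^ 2 + v.2 ^ 2)
def eta1 : ℝ × ℝ := (1, 0)
def eta2 : ℝ × ℝ := (1 / 2, Real.sqrt 3 / 2)
def eta3 : ℝ × ℝ := eta1 - eta2

def mvec (A : Matrix (Fin 2) (Fin 2) ℝ) (v : ℝ × ℝ) : ℝ × ℝ :=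
  (A 0 0 * v.1 + A 0 1 * v.2, A 1 0 * v.1 + A 1 1 * v.2)

/-- Ĵ(A) = ∑ₖ J(|Aηₖ|). -/
def Jhat (J : ℝ → ℝ) (A : Matrix (Fin 2) (Fin 2) ℝ) : ℝ :=
  J (nrm (mvec A eta1)) + J (nrm (mvec A eta2)) + J (nrm (mvec A eta3))

open Topology

theorem lowerSemicontinuous_comp_of_tendsto_nhdsGT_atTop {X : Type*} [TopologicalSpace X]
    {J : ℝ → ℝ} {f : X → ℝ} (hJc : ContinuousOn J (Ioi 0))
    (hJ0 : Tendsto J (𝓝[>] 0) atTop) (hf : Continuous f) (hf0 : ∀ x, 0 ≤ f x) :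
    LowerSemicontinuous fun x => J (f x) := by
  intro x y hy
  rcases (hf0 x).eq_or_lt with hx | hx
  · have hJy : ∀ᶠ z in 𝓝 0, z ∈ Ioi 0 → y < J z :=
      eventually_nhdsWithin_iff.mp (hJ0.eventually (eventually_gt_atTop y))
    filter_upwards [(hx ▸ hf.tendsto x).eventually hJy] with x' hx'
    rcases (hf0 x').eq_or_lt with h0 | hpos
    · rwa [← h0, hx]
    · exact hx' hpos
  · exact ((hJc.continuousAt (Ioi_mem_nhds hx)).comp hf.continuousAt).lowerSemicontinuousAt y hy

theorem continuous_nrm_mvec (v : ℝ × ℝ) :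
    Continuous fun A : Matrix (Fin 2) (Fin 2) ℝ => nrm (mvec A v) := by
  unfold nrm mvec; fun_prop

theorem isClosed_setOf_Jhat_le {J : ℝ → ℝ} (hJc : ContinuousOn J (Ioi 0))
    (hJ0 : Tendsto J (𝓝[>] 0) atTop) (c : ℝ) : IsClosed {A | Jhat J A ≤ c} := by
  have h (v : ℝ × ℝ) : LowerSemicontinuous fun A => J (nrm (mvec A v)) :=
    lowerSemicontinuous_comp_of_tendsto_nhdsGT_atTop hJc hJ0 (continuous_nrm_mvec v)
      fun _ => Real.sqrt_nonneg _
  exact (((h eta1).add (h eta2)).add (h eta3)).isClosed_preimage c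

theorem abs_fst_le_nrm (v : ℝ × ℝ) : |v.1| ≤ nrm v := Real.abs_le_sqrt (by nlinarith [sq_nonneg v.2])

theorem abs_snd_le_nrm (v : ℝ × ℝ) : |v.2| ≤ nrm v := Real.abs_le_sqrt (by nlinarith [sq_nonneg v.1])

theorem Matrix.isCompact_setOf_forall_abs_le {m n : Type*} (R : ℝ) :
    IsCompact {A : Matrix m n ℝ | ∀ i j, |A i j| ≤ R} := by
  have hbox : {A : Matrix m n ℝ | ∀ i j, |A i j| ≤ R} =
      univ.pi fun _ => univ.pi fun _ => Icc (-R) R := by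
    ext A
    exact ⟨fun h i _ j _ => abs_le.mp (h i j), fun h i j => abs_le.mpr (h i trivial j trivial)⟩
  rw [hbox]
  exact isCompact_univ_pi fun _ => isCompact_univ_pi fun _ => isCompact_Icc

theorem abs_le_three_mul_of_abs_le {x y M : ℝ} (hx : |x| ≤ M)
    (hxy : |x * (1 / 2) + y * (√3 / 2)| ≤ M) : |y| ≤ 3 * M := by
  have h3 : 1 ≤ √3 := Real.one_le_sqrt.mpr (by norm_num)
  rw [abs_le] at *
  constructor <;> nlinarith

theorem abs_entry_le_of_nrm_mvec_eta_le {A : Matrix (Fin 2) (Fin 2) ℝ} {M : ℝ}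
    (h1 : nrm (mvec A eta1) ≤ M) (h2 : nrm (mvec A eta2) ≤ M) (i j : Fin 2) :
    |A i j| ≤ 3 * M := by
  have hM : 0 ≤ M := (Real.sqrt_nonneg _).trans h1
  have h00 := (abs_fst_le_nrm _).trans h1
  have h10 := (abs_snd_le_nrm _).trans h1
  have hrow0 := (abs_fst_le_nrm _).trans h2
  have hrow1 := (abs_snd_le_nrm _).trans h2
  simp only [mvec, eta1, eta2, mul_one, mul_zero, add_zero] at h00 h10 hrow0 hrow1
  fin_cases i <;> fin_cases j
  · exact h00.trans (by linarith)
  · exact abs_le_three_mul_of_abs_le h00 hrow0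
  · exact h10.trans (by linarith)
  · exact abs_le_three_mul_of_abs_le h10 hrow1

theorem J_nrm_mvec_eta_le_Jhat {J : ℝ → ℝ} (hJnn : ∀ z, 0 ≤ z → 0 ≤ J z)
    (A : Matrix (Fin 2) (Fin 2) ℝ) :
    J (nrm (mvec A eta1)) ≤ Jhat J A ∧ J (nrm (mvec A eta2)) ≤ Jhat J A := by
  have h (v : ℝ × ℝ) : 0 ≤ J (nrm (mvec A v)) := hJnn _ (Real.sqrt_nonneg _)
  unfold Jhat
  constructor <;> linarith [h eta1, h eta2, h eta3]

theorem stmt_3_general (J : ℝ → ℝ) (Jinf : ℝ) (hJinf : 0 < Jinf)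
    (hJc : ContinuousOn J (Set.Ioi 0))
    (hJnn : ∀ z, 0 ≤ z → 0 ≤ J z)
    (hJ0 : Tendsto J (nhdsWithin 0 (Set.Ioi 0)) atTop)
    (hJtop : Tendsto J atTop (nhds Jinf))
    (s : ℝ) (hs : s ∈ Set.Ioo (0 : ℝ) 1) :
    IsCompact {A : Matrix (Fin 2) (Fin 2) ℝ | Jhat J A ≤ s * Jinf} := by
  obtain ⟨M, hM⟩ : ∃ M, ∀ z, M ≤ z → s * Jinf < J z :=
    eventually_atTop.mp (hJtop.eventually_const_lt (mul_lt_of_lt_one_left hJinf hs.2))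
  refine (Matrix.isCompact_setOf_forall_abs_le (3 * M)).of_isClosed_subset
    (isClosed_setOf_Jhat_le hJc hJ0 _) fun A hA => ?_
  have hbound (v : ℝ × ℝ) (hv : J (nrm (mvec A v)) ≤ Jhat J A) : nrm (mvec A v) ≤ M :=
    (not_le.mp fun h => (hM _ h).not_ge (hv.trans hA)).le
  obtain ⟨h1, h2⟩ := J_nrm_mvec_eta_le_Jhat hJnn A
  exact abs_entry_le_of_nrm_mvec_eta_le (hbound _ h1) (hbound _ h2)

theorem stmt_3 (J : ℝ → ℝ) (Jinf : ℝ) (hJinf : 0 < Jinf)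
    (hJc : ContinuousOn J (Set.Ioi 0))
    (hJnn : ∀ z, 0 ≤ z → 0 ≤ J z) (hJ1 : J 1 = 0)
    (hJ0 : Tendsto J (nhdsWithin 0 (Set.Ioi 0)) atTop)
    (hJtop : Tendsto J atTop (nhds Jinf))
    (s : ℝ) (hs : s ∈ Set.Ioo (0 : ℝ) 1) :
    IsCompact {A : Matrix (Fin 2) (Fin 2) ℝ | Jhat J A ≤ s * Jinf} :=
  stmt_3_general J Jinf hJinf hJc hJnn hJ0 hJtop s hs
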